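/- arXiv:1905.05695 — 6 statements merged into one kernel-verified Lean document; each statement's English description precedes it below -/
import Mathlib

section
/- For any invertible linear map g on R^d and any r-dimensional subspace V of R^d, the Hausdorff-type distance between gV and the top singular subspace V_g^+ satisfies d_H(gV, V_g^+) ≤ r·σ_1(g)^{r-1}·σ_{r+1}(g) / ‖(∧^r g)(v)‖, where v is the wedge product of an orthonormal basis of V. -/
open scoped RealInnerProductSpace

noncomputable section

abbrev Euc (d : ℕ) := EuclideanSpace ℝ (Fin d)

/-- Norm of the wedge product of a family of vectors (square root of Gram determinant). -/
def wnorm {d : ℕ} {ι : Type*} [Fintype ι] [DecidableEq ι] (x : ι → Euc d) : ℝ :=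
  Real.sqrt (Matrix.of fun i j => ⟪x i, x j⟫).det

/-- The span of the first `r` standard basis vectors of `ℝ^d`. -/
def stdSpanLT (d r : ℕ) : Submodule ℝ (Euc d) :=
  Submodule.span ℝ ((fun i => EuclideanSpace.single i (1 : ℝ)) '' {i : Fin d | (i : ℕ) < r})

/-- `d_H(V, V') = sup` over unit vectors `v ∈ V` of `dist(v, V')`. -/
def dH {d : ℕ} (V V' : Submodule ℝ (Euc d)) : ℝ :=
  sSup {c | ∃ v ∈ V, ‖v‖ = 1 ∧ c = Metric.infDist v (V' : Set (Euc d))}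

/-!
Put `f = g ∘ V.subtype`. The quantity `‖(∧^r g) v‖` is the Gram volume `f.normDet`, which does not
depend on the orthonormal basis of `V`. For a unit vector `g u` of `gV`, Hadamard's inequality in
an orthonormal basis of `V` starting with `u / ‖u‖` gives `f.normDet ≤ σ_1^(r-1) / ‖u‖`. In Cartan
coordinates `k⁻¹ (g u) = σ · l u`, so truncating it to its first `r` coordinates lands in
`k⁻¹ V_g^+` and moves it by at most `σ_(r+1) ‖u‖`. Multiplying the two bounds gives
`dist (g u) V_g^+ ≤ σ_1^(r-1) σ_(r+1) / f.normDet`.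
-/

open Module Finset

namespace LinearMap

variable {U F : Type*} [NormedAddCommGroup U] [InnerProductSpace ℝ U] [FiniteDimensional ℝ U]
  [NormedAddCommGroup F] [InnerProductSpace ℝ F]

theorem normDet_le_prod_norm {ι : Type*} [Fintype ι] [LinearOrder ι] [LocallyFiniteOrderBot ι]
    [WellFoundedLT ι] (f : U →ₗ[ℝ] F) (b : OrthonormalBasis ι ℝ U) :
    f.normDet ≤ ∏ i, ‖f (b i)‖ := by
  by_cases hker : ker f = ⊥
  · have hrank : finrank ℝ (range f) = Fintype.card ι := by
      rw [finrank_range_of_inj (ker_eq_bot.mp hker), finrank_eq_card_basis b.toBasis]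
    set y : ι → range f := fun i => f.rangeRestrict (b i)
    -- Gram–Schmidt on `f ∘ b` makes the matrix of `f` triangular, with diagonal `⟪c i, f (b i)⟫`.
    set c := InnerProductSpace.gramSchmidtOrthonormalBasis hrank y
    have hmat : toMatrix b.toBasis c.toBasis f.rangeRestrict = c.toBasis.toMatrix y := by
      ext i j
      rw [toMatrix_apply, Basis.toMatrix_apply]
      rfl
    rw [f.normDet_eq_norm_det_toMatrix_rangeRestrict b c, hmat, ← Basis.det_apply,
      InnerProductSpace.gramSchmidtOrthonormalBasis_det, Real.norm_eq_abs, abs_prod]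
    gcongr with i
    calc |(⟪c i, y i⟫ : ℝ)| ≤ ‖c i‖ * ‖y i‖ := abs_real_inner_le_norm _ _
      _ = ‖f (b i)‖ := by rw [c.norm_eq_one, one_mul]; rfl
  · rw [normDet_eq_zero_iff_ker_ne_bot.mpr hker]
    positivity

theorem normDet_mul_norm_le (f : U →ₗ[ℝ] F) {C : ℝ} (hC : ∀ x, ‖f x‖ ≤ C * ‖x‖) (u : U) :
    f.normDet * ‖u‖ ≤ ‖f u‖ * C ^ (finrank ℝ U - 1) := by
  rcases eq_or_ne u 0 with rfl | hu
  · simp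
  have hu₀ : 0 < ‖u‖ := norm_pos_iff.mpr hu
  have hC₀ : 0 ≤ C := nonneg_of_mul_nonneg_left ((norm_nonneg _).trans (hC u)) hu₀
  set n := finrank ℝ U
  have hn : 0 < n := finrank_pos_iff_exists_ne_zero.mpr ⟨u, hu⟩
  let i₀ : Fin n := ⟨0, hn⟩
  have hunit : Orthonormal ℝ (({i₀} : Set (Fin n)).domRestrict fun _ => ‖u‖⁻¹ • u) :=
    ⟨fun _ => by simp [norm_smul, hu₀.ne'], fun i j hij => absurd (Subsingleton.elim i j) hij⟩
  obtain ⟨b, hb⟩ := Orthonormal.exists_orthonormalBasis_extension_of_card_eq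
    (by rw [Fintype.card_fin]) hunit
  have hb₀ : b i₀ = ‖u‖⁻¹ • u := hb i₀ rfl
  have hrest : ∏ i ∈ univ.erase i₀, ‖f (b i)‖ ≤ C ^ (n - 1) := by
    calc ∏ i ∈ univ.erase i₀, ‖f (b i)‖ ≤ ∏ _i ∈ univ.erase i₀, C :=
          prod_le_prod (fun _ _ => norm_nonneg _) fun i _ => by
            simpa [b.norm_eq_one] using hC (b i)
      _ = C ^ (n - 1) := by simp
  calc f.normDet * ‖u‖ ≤ (∏ i, ‖f (b i)‖) * ‖u‖ := by gcongr; exact f.normDet_le_prod_norm b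
    _ = ‖f u‖ * ∏ i ∈ univ.erase i₀, ‖f (b i)‖ := by
      rw [← mul_prod_erase _ _ (mem_univ i₀), hb₀, map_smul, norm_smul, norm_inv, norm_norm]
      field_simp
    _ ≤ ‖f u‖ * C ^ (n - 1) := by gcongr

end LinearMap

theorem wnorm_eq_normDet {d : ℕ} {E : Type*} [NormedAddCommGroup E] [InnerProductSpace ℝ E]
    [FiniteDimensional ℝ E] {ι : Type*} [Fintype ι] [DecidableEq ι] (f : E →ₗ[ℝ] Euc d)
    {v : ι → E} (hv : Orthonormal ℝ v) :
    wnorm (fun i => f (v i)) = (f ∘ₗ (Submodule.span ℝ (Set.range v)).subtype).normDet := by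
  set V := Submodule.span ℝ (Set.range v)
  have hv' : Orthonormal ℝ (Basis.span hv.linearIndependent) := by
    rw [show ⇑(Basis.span hv.linearIndependent) =
        Set.codRestrict v V (fun i => Submodule.subset_span ⟨i, rfl⟩) from
      funext (Basis.span_apply hv.linearIndependent)]
    exact hv.codRestrict V _
  have hsq := (f ∘ₗ V.subtype).normDet_sq_eq_det_gram
    ((Basis.span hv.linearIndependent).toOrthonormalBasis hv')
  simp only [Basis.coe_toOrthonormalBasis, Basis.span_apply, LinearMap.comp_apply,
    Submodule.subtype_apply] at hsq
  rw [wnorm, ← Matrix.gram, ← hsq, RCLike.ofReal_real_eq_id, id,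
    Real.sqrt_sq (LinearMap.normDet_nonneg _)]

theorem EuclideanSpace.norm_le_of_abs_apply_le {ι : Type*} [Fintype ι]
    {x y : EuclideanSpace ℝ ι} {c : ℝ} (hc : 0 ≤ c) (h : ∀ i, |x i| ≤ c * |y i|) :
    ‖x‖ ≤ c * ‖y‖ := by
  rw [← abs_of_nonneg hc, ← Real.norm_eq_abs, ← norm_smul, EuclideanSpace.norm_eq,
    EuclideanSpace.norm_eq]
  gcongr with i
  simpa [abs_mul, abs_of_nonneg hc] using h i

theorem mem_stdSpanLT_of_apply_eq_zero {d r : ℕ} {z : Euc d} (hz : ∀ i : Fin d, r ≤ i → z i = 0) :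
    z ∈ stdSpanLT d r := by
  rw [← (EuclideanSpace.basisFun (Fin d) ℝ).sum_repr z]
  refine Submodule.sum_mem _ fun i _ => ?_
  rw [EuclideanSpace.basisFun_repr, EuclideanSpace.basisFun_apply]
  rcases lt_or_ge (i : ℕ) r with hi | hi
  · exact Submodule.smul_mem _ _ (Submodule.subset_span ⟨i, hi, rfl⟩)
  · rw [hz i hi, zero_smul]
    exact Submodule.zero_mem _

section Cartan

variable {d : ℕ} {g : Euc d →ₗ[ℝ] Euc d} {k l : Euc d ≃ₗᵢ[ℝ] Euc d} {σ : Fin d → ℝ}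

theorem injective_of_cartan (hσ : ∀ i, 0 < σ i)
    (hcartan : ∀ x : Euc d, ∀ i : Fin d, k.symm (g x) i = σ i * l x i) :
    Function.Injective g := by
  refine (injective_iff_map_eq_zero g).mpr fun x hx => l.map_eq_zero_iff.mp ?_
  ext i
  have := hcartan x i
  rw [hx, map_zero] at this
  simpa [(hσ i).ne'] using this.symm

theorem norm_le_of_cartan (hσmono : Antitone σ) (hσ : ∀ i, 0 ≤ σ i)
    (hcartan : ∀ x : Euc d, ∀ i : Fin d, k.symm (g x) i = σ i * l x i) (h0 : 0 < d) (x : Euc d) :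
    ‖g x‖ ≤ σ ⟨0, h0⟩ * ‖x‖ := by
  rw [← k.symm.norm_map, ← l.norm_map x]
  refine EuclideanSpace.norm_le_of_abs_apply_le (hσ _) fun i => ?_
  rw [hcartan, abs_mul, abs_of_nonneg (hσ i)]
  exact mul_le_mul_of_nonneg_right (hσmono (show (⟨0, h0⟩ : Fin d) ≤ i from i.val.zero_le))
    (abs_nonneg _)

theorem infDist_le_of_cartan (hσmono : Antitone σ) (hσ : ∀ i, 0 ≤ σ i)
    (hcartan : ∀ x : Euc d, ∀ i : Fin d, k.symm (g x) i = σ i * l x i) {r : ℕ} (hrd : r < d)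
    (x : Euc d) :
    Metric.infDist (g x) ((stdSpanLT d r).map (k.toLinearEquiv : Euc d →ₗ[ℝ] Euc d)) ≤
      σ ⟨r, hrd⟩ * ‖x‖ := by
  set y := k.symm (g x)
  let z : Euc d := WithLp.toLp 2 fun i => if (i : ℕ) < r then y i else 0
  have hz : z ∈ stdSpanLT d r :=
    mem_stdSpanLT_of_apply_eq_zero fun i hi => if_neg (not_lt.mpr hi)
  calc Metric.infDist (g x) _ ≤ dist (g x) (k z) :=
        Metric.infDist_le_dist_of_mem (Submodule.mem_map_of_mem hz)
    _ = ‖y - z‖ := by rw [dist_eq_norm, ← k.symm.norm_map, map_sub, k.symm_apply_apply]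
    _ ≤ σ ⟨r, hrd⟩ * ‖l x‖ := by
        refine EuclideanSpace.norm_le_of_abs_apply_le (hσ _) fun i => ?_
        rcases lt_or_ge (i : ℕ) r with hi | hi
        · simpa [z, hi] using mul_nonneg (hσ _) (abs_nonneg _)
        · simp only [PiLp.sub_apply, z, if_neg (not_lt.mpr hi), sub_zero, y, hcartan, abs_mul,
            abs_of_nonneg (hσ i)]
          exact mul_le_mul_of_nonneg_right (hσmono (Fin.mk_le_of_le_val hi)) (abs_nonneg _)
    _ = σ ⟨r, hrd⟩ * ‖x‖ := by rw [l.norm_map]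

end Cartan

theorem stmt0_general {d r : ℕ} (hrd : r < d)
    (g : Euc d →ₗ[ℝ] Euc d)
    -- Cartan decomposition `g = k ∘ diag σ ∘ l` with `σ_1 ≥ ... ≥ σ_d > 0`
    (k l : Euc d ≃ₗᵢ[ℝ] Euc d) (σ : Fin d → ℝ) (hσmono : Antitone σ) (hσpos : ∀ i, 0 < σ i)
    (hcartan : ∀ x : Euc d, ∀ i : Fin d, k.symm (g x) i = σ i * l x i)
    (V : Submodule ℝ (Euc d)) (v : Fin r → Euc d)
    (hon : Orthonormal ℝ v) (hspan : Submodule.span ℝ (Set.range v) = V) :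
    dH (V.map g) ((stdSpanLT d r).map (k.toLinearEquiv : Euc d →ₗ[ℝ] Euc d)) ≤
      r * (σ ⟨0, Nat.lt_of_le_of_lt (Nat.zero_le r) hrd⟩) ^ (r - 1) * σ ⟨r, hrd⟩ /
        wnorm (fun i => g (v i)) := by
  subst hspan
  set V := Submodule.span ℝ (Set.range v)
  set f := g ∘ₗ V.subtype
  have hσ : ∀ i, 0 ≤ σ i := fun i => (hσpos i).le
  have h0 : 0 < d := r.zero_le.trans_lt hrd
  have hf_pos : 0 < f.normDet := f.normDet_nonneg.lt_of_ne' <| (f.normDet_ne_zero_tfae.out 4 0).mp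
    ((injective_of_cartan hσpos hcartan).comp V.injective_subtype)
  have hrank : finrank ℝ V = r := by
    rw [finrank_span_eq_card hon.linearIndependent, Fintype.card_fin]
  refine Real.sSup_le ?_ (div_nonneg (mul_nonneg (mul_nonneg r.cast_nonneg (pow_nonneg (hσ _) _))
    (hσ _)) (Real.sqrt_nonneg _))
  rintro _ ⟨_, ⟨u, hu, rfl⟩, hgu, rfl⟩
  have hu₀ : (⟨u, hu⟩ : V) ≠ 0 := by rintro ⟨⟩; simp at hgu
  have hr : (1 : ℝ) ≤ r := by
    exact_mod_cast hrank ▸ finrank_pos_iff_exists_ne_zero.mpr ⟨_, hu₀⟩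
  have hdet : f.normDet * ‖u‖ ≤ σ ⟨0, h0⟩ ^ (r - 1) := by
    simpa [f, hrank, hgu] using f.normDet_mul_norm_le
      (fun x => norm_le_of_cartan hσmono hσ hcartan h0 x) ⟨u, hu⟩
  rw [wnorm_eq_normDet g hon, le_div_iff₀ hf_pos]
  calc Metric.infDist (g u) _ * f.normDet ≤ σ ⟨r, hrd⟩ * ‖u‖ * f.normDet :=
        mul_le_mul_of_nonneg_right (infDist_le_of_cartan hσmono hσ hcartan hrd u) hf_pos.le
    _ = σ ⟨r, hrd⟩ * (f.normDet * ‖u‖) := by ring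
    _ ≤ σ ⟨r, hrd⟩ * σ ⟨0, h0⟩ ^ (r - 1) := by gcongr; exact hσ _
    _ ≤ r * σ ⟨0, h0⟩ ^ (r - 1) * σ ⟨r, hrd⟩ := by
        nlinarith [mul_nonneg (hσ ⟨r, hrd⟩) (pow_nonneg (hσ ⟨0, h0⟩) (r - 1))]

theorem stmt0 {d r : ℕ} (hr : 0 < r) (hrd : r < d)
    (g : Euc d →ₗ[ℝ] Euc d) (hg : Function.Bijective g)
    -- Cartan decomposition `g = k ∘ diag σ ∘ l` with `σ_1 ≥ ... ≥ σ_d > 0`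
    (k l : Euc d ≃ₗᵢ[ℝ] Euc d) (σ : Fin d → ℝ) (hσmono : Antitone σ) (hσpos : ∀ i, 0 < σ i)
    (hcartan : ∀ x : Euc d, ∀ i : Fin d, k.symm (g x) i = σ i * l x i)
    (V : Submodule ℝ (Euc d)) (v : Fin r → Euc d)
    (hon : Orthonormal ℝ v) (hspan : Submodule.span ℝ (Set.range v) = V) :
    dH (V.map g) ((stdSpanLT d r).map (k.toLinearEquiv : Euc d →ₗ[ℝ] Euc d)) ≤
      r * (σ ⟨0, Nat.lt_of_le_of_lt (Nat.zero_le r) hrd⟩) ^ (r - 1) * σ ⟨r, hrd⟩ /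
        wnorm (fun i => g (v i)) :=
  stmt0_general hrd g k l σ hσmono hσpos hcartan V v hon hspan
end
end

section
/- For nonzero vectors x_1,...,x_l, y_1,...,y_l in R^d, the volume angles satisfy |∠(x̄_1,...,x̄_l) − ∠(ȳ_1,...,ȳ_l)| ≤ 2·Σ_{i=1}^l ∠(x̄_i, ȳ_i), where ∠(x̄_1,...,x̄_l) = ‖x_1 ∧ ... ∧ x_l‖/(‖x_1‖···‖x_l‖). -/
open scoped RealInnerProductSpace

noncomputable section

/-- The volume angle `∠(x̄_1, ..., x̄_l) = ‖x_1 ∧ ... ∧ x_l‖ / (‖x_1‖ ⋯ ‖x_l‖)`. -/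
def angVec {d : ℕ} {ι : Type*} [Fintype ι] [DecidableEq ι] (x : ι → Euc d) : ℝ :=
  wnorm x / ∏ i, ‖x i‖

/-! The wedge norm of a family indexed by `Fin n` is the norm of `x 0 ∧ ⋯ ∧ x (n - 1)` in the
exterior power, so it is a seminorm in each slot separately. Normalise all vectors to unit length,
flipping the sign of `y i` so that `⟪x i, y i⟫ ≥ 0`; no angle changes. Then replace the `x i` by the
`y i` one at a time: by Hadamard's inequality each swap changes the wedge norm by at most
`‖x i - y i‖`, and for unit vectors at an acute angle `‖x i - y i‖ ≤ 2 ∠(x̄ i, ȳ i)`. -/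

open Function Finset exteriorPower

lemma Matrix.PosSemidef.det_le_one_of_diag_eq_one {ι : Type*} [Fintype ι] [DecidableEq ι]
    {A : Matrix ι ι ℝ} (hA : A.PosSemidef) (hdiag : ∀ i, A i i = 1) : A.det ≤ 1 := by
  set μ := hA.isHermitian.eigenvalues
  have hsum : ∑ i, μ i = Fintype.card ι := by
    have h := hA.isHermitian.trace_eq_sum_eigenvalues
    simp only [Matrix.trace, Matrix.diag, hdiag, sum_const, card_univ, nsmul_eq_mul, mul_one,
      RCLike.ofReal_real_eq_id, id] at h
    exact h.symm
  -- AM-GM for the eigenvalues: `t ≤ exp (t - 1)`, and the `t - 1` sum to `0`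
  calc A.det = ∏ i, μ i := by simpa using hA.isHermitian.det_eq_prod_eigenvalues
    _ ≤ ∏ i, Real.exp (μ i - 1) :=
      prod_le_prod (fun i _ => hA.eigenvalues_nonneg i)
        fun i _ => by linarith [Real.add_one_le_exp (μ i - 1)]
    _ = 1 := by simp [← Real.exp_sum, sum_sub_distrib, hsum]

lemma exists_smul_norm_eq_one_inner_nonneg {E : Type*} [NormedAddCommGroup E]
    [InnerProductSpace ℝ E] {x y : E} (hx : x ≠ 0) (hy : y ≠ 0) :
    ∃ a b : ℝ, a ≠ 0 ∧ b ≠ 0 ∧ ‖a • x‖ = 1 ∧ ‖b • y‖ = 1 ∧ 0 ≤ ⟪a • x, b • y⟫ := by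
  have hx' : ‖x‖ ≠ 0 := norm_ne_zero_iff.mpr hx
  have hy' : ‖y‖ ≠ 0 := norm_ne_zero_iff.mpr hy
  have hunit : ∀ {c : ℝ}, |c| = ‖y‖⁻¹ → ‖c • y‖ = 1 := fun hc => by
    rw [norm_smul, Real.norm_eq_abs, hc, inv_mul_cancel₀ hy']
  have hxn : ‖‖x‖⁻¹ • x‖ = 1 := by rw [norm_smul, norm_inv, norm_norm, inv_mul_cancel₀ hx']
  rcases le_total 0 ⟪x, y⟫ with h | h
  · refine ⟨‖x‖⁻¹, ‖y‖⁻¹, by positivity, by positivity, hxn, hunit (by simp), ?_⟩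
    rw [real_inner_smul_left, real_inner_smul_right]
    positivity
  · refine ⟨‖x‖⁻¹, -‖y‖⁻¹, by positivity, by simpa using hy', hxn, hunit (by simp), ?_⟩
    rw [real_inner_smul_left, real_inner_smul_right]
    have : 0 ≤ ‖x‖⁻¹ * ‖y‖⁻¹ := by positivity
    nlinarith

lemma abs_sub_le_sum_of_update {ι α : Type*} [Fintype ι] [DecidableEq ι] (f : (ι → α) → ℝ)
    {S : Set α} {x y : ι → α} (hx : ∀ i, x i ∈ S) (hy : ∀ i, y i ∈ S) (g : ι → ℝ)
    (hf : ∀ z : ι → α, (∀ i, z i ∈ S) → ∀ k, |f (update z k (x k)) - f (update z k (y k))| ≤ g k) :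
    |f x - f y| ≤ ∑ k, g k := by
  suffices h : ∀ s : Finset ι, |f x - f (s.piecewise y x)| ≤ ∑ k ∈ s, g k by
    simpa using h univ
  intro s
  induction s using Finset.induction_on with
  | empty => simp
  | insert k s hks ih =>
    set z := s.piecewise y x
    have hz : ∀ i, z i ∈ S := fun i => by
      by_cases hi : i ∈ s <;> simp [z, hi, hx i, hy i]
    have hzk : update z k (x k) = z := by simp [z, hks]
    rw [piecewise_insert, sum_insert hks, add_comm]
    calc |f x - f (update z k (y k))|
        ≤ |f x - f z| + |f z - f (update z k (y k))| := abs_sub_le _ _ _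
      _ ≤ ∑ k ∈ s, g k + g k := add_le_add ih (by simpa only [hzk] using hf z hz k)

section Wedge

variable {d : ℕ} {ι : Type*} [Fintype ι] [DecidableEq ι]

lemma wnorm_smul (c : ι → ℝ) (x : ι → Euc d) :
    wnorm (fun i => c i • x i) = (∏ i, |c i|) * wnorm x := by
  have hgram : (Matrix.of fun i j => ⟪c i • x i, c j • x j⟫ : Matrix ι ι ℝ)
      = Matrix.diagonal c * (Matrix.of fun i j => ⟪x i, x j⟫) * Matrix.diagonal c := by
    ext i j
    simp only [Matrix.mul_diagonal, Matrix.diagonal_mul, Matrix.of_apply,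
      real_inner_smul_left, real_inner_smul_right]
    ring
  rw [wnorm, wnorm, hgram, Matrix.det_mul, Matrix.det_mul, Matrix.det_diagonal, mul_comm,
    ← mul_assoc, ← sq, Real.sqrt_mul (sq_nonneg _), Real.sqrt_sq_eq_abs, abs_prod]

lemma wnorm_le_one_of_norm_eq_one {x : ι → Euc d} (hx : ∀ i, ‖x i‖ = 1) : wnorm x ≤ 1 := by
  refine Real.sqrt_le_one.mpr ((Matrix.posSemidef_gram ℝ x).det_le_one_of_diag_eq_one fun i => ?_)
  simp [Matrix.gram_apply, hx i]

/-- Hadamard's inequality. -/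
lemma wnorm_le_prod_norm (x : ι → Euc d) : wnorm x ≤ ∏ i, ‖x i‖ := by
  by_cases h0 : ∃ i, x i = 0
  · obtain ⟨i, hi⟩ := h0
    have hdet : (Matrix.of fun i j => ⟪x i, x j⟫ : Matrix ι ι ℝ).det = 0 :=
      Matrix.det_eq_zero_of_row_eq_zero i fun j => by simp [hi]
    rw [wnorm, hdet, Real.sqrt_zero]
    exact prod_nonneg fun i _ => norm_nonneg _
  · have hx : ∀ i, ‖x i‖ ≠ 0 := fun i => norm_ne_zero_iff.mpr fun h => h0 ⟨i, h⟩
    have hunit := wnorm_le_one_of_norm_eq_one (x := fun i => ‖x i‖⁻¹ • x i) fun i => by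
      rw [norm_smul, norm_inv, norm_norm, inv_mul_cancel₀ (hx i)]
    rw [wnorm_smul] at hunit
    simp only [abs_inv, abs_norm, prod_inv_distrib] at hunit
    have hprod : 0 < ∏ i, ‖x i‖ := prod_pos fun i _ => (norm_nonneg _).lt_of_ne' (hx i)
    rwa [inv_mul_le_iff₀ hprod, mul_one] at hunit

lemma wnorm_update_le_norm {z : ι → Euc d} (hz : ∀ i, ‖z i‖ = 1) (k : ι) (w : Euc d) : wnorm (update z k w) ≤ ‖w‖ := by
  refine (wnorm_le_prod_norm _).trans_eq ?_
  rw [prod_eq_single k (fun j _ hj => by rw [update_of_ne hj, hz j]) (by simp), update_self]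

lemma wnorm_eq_norm_ιMulti {n : ℕ} (x : Fin n → Euc d) : wnorm x = ‖ιMulti ℝ n x‖ := by
  rw [norm_eq_sqrt_real_inner, inner_ιMulti_self]
  rfl

lemma abs_wnorm_update_sub_le {n : ℕ} (x : Fin n → Euc d) (k : Fin n) (a b : Euc d) :
    |wnorm (update x k a) - wnorm (update x k b)| ≤ wnorm (update x k (a - b)) := by
  simp only [wnorm_eq_norm_ιMulti, AlternatingMap.map_update_sub]
  exact abs_norm_sub_norm_le _ _

lemma norm_sub_le_two_mul_wnorm_pair {u v : Euc d} (hu : ‖u‖ = 1) (hv : ‖v‖ = 1)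
    (huv : 0 ≤ ⟪u, v⟫) : ‖u - v‖ ≤ 2 * wnorm ![u, v] := by
  have huv' : ⟪u, v⟫ ≤ 1 := (real_inner_le_norm u v).trans (by simp [hu, hv])
  have hpair : wnorm ![u, v] = √(1 - ⟪u, v⟫ ^ 2) := by
    rw [wnorm, Matrix.det_fin_two]
    simp [hu, hv, real_inner_comm u v, sq]
  have hsub : ‖u - v‖ = √(2 - 2 * ⟪u, v⟫) := by
    rw [← Real.sqrt_sq (norm_nonneg (u - v)), norm_sub_sq_real, hu, hv]
    ring_nf
  rw [hpair, hsub, Real.sqrt_le_iff, mul_pow, Real.sq_sqrt (by nlinarith)]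
  constructor
  · positivity
  · nlinarith

lemma angVec_smul {c : ι → ℝ} (hc : ∀ i, c i ≠ 0) (x : ι → Euc d) :
    angVec (fun i => c i • x i) = angVec x := by
  have hc' : ∏ i, |c i| ≠ 0 := prod_ne_zero_iff.mpr fun i _ => abs_ne_zero.mpr (hc i)
  simp only [angVec, wnorm_smul, norm_smul, Real.norm_eq_abs, prod_mul_distrib]
  exact mul_div_mul_left _ _ hc'

lemma angVec_pair_smul {a b : ℝ} (ha : a ≠ 0) (hb : b ≠ 0) (u v : Euc d) :
    angVec ![a • u, b • v] = angVec ![u, v] := by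
  convert angVec_smul (c := ![a, b]) (fun i => by fin_cases i <;> assumption) ![u, v] using 2
  ext i : 1
  fin_cases i <;> rfl

lemma angVec_of_norm_eq_one {x : ι → Euc d} (hx : ∀ i, ‖x i‖ = 1) : angVec x = wnorm x := by
  simp [angVec, hx]

lemma abs_wnorm_update_sub_le_two_mul_wnorm_pair {n : ℕ} {z : Fin n → Euc d}
    (hz : ∀ i, ‖z i‖ = 1) (k : Fin n) {u v : Euc d} (hu : ‖u‖ = 1) (hv : ‖v‖ = 1)
    (huv : 0 ≤ ⟪u, v⟫) :
    |wnorm (update z k u) - wnorm (update z k v)| ≤ 2 * wnorm ![u, v] :=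
  calc |wnorm (update z k u) - wnorm (update z k v)|
      ≤ wnorm (update z k (u - v)) := abs_wnorm_update_sub_le z k u v
    _ ≤ ‖u - v‖ := wnorm_update_le_norm hz k _
    _ ≤ 2 * wnorm ![u, v] := norm_sub_le_two_mul_wnorm_pair hu hv huv

end Wedge

theorem stmt1 {d l : ℕ} (x y : Fin l → Euc d) (hx : ∀ i, x i ≠ 0) (hy : ∀ i, y i ≠ 0) :
    |angVec x - angVec y| ≤ 2 * ∑ i, angVec ![x i, y i] := by
  choose a b ha hb hax hby hab using fun i => exists_smul_norm_eq_one_inner_nonneg (hx i) (hy i)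
  calc |angVec x - angVec y|
      = |wnorm (fun i => a i • x i) - wnorm (fun i => b i • y i)| := by
        rw [← angVec_smul ha x, ← angVec_smul hb y, angVec_of_norm_eq_one hax,
          angVec_of_norm_eq_one hby]
    _ ≤ ∑ i, 2 * wnorm ![a i • x i, b i • y i] :=
        abs_sub_le_sum_of_update wnorm (S := Metric.sphere 0 1) (by simpa using hax)
          (by simpa using hby) _ fun z hz k =>
            abs_wnorm_update_sub_le_two_mul_wnorm_pair (by simpa using hz) k (hax k) (hby k)
              (hab k)
    _ = 2 * ∑ i, angVec ![x i, y i] := by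
        rw [mul_sum]
        refine sum_congr rfl fun i _ => ?_
        rw [← angVec_pair_smul (ha i) (hb i), angVec_of_norm_eq_one]
        intro j
        fin_cases j
        exacts [hax i, hby i]
end
end

section
/- For any g ∈ GL_d(R) with singular values σ_1 ≥ ... ≥ σ_d and any nonzero x ∈ R^d, one has σ_r(g)·∠(x̄, V_g^-) ≤ ‖gx‖/‖x‖ ≤ σ_1(g)·∠(x̄, V_g^-) + σ_{r+1}(g). -/
/-!
Put `y = l x`. Transporting by the isometry `l`, the projection onto `(V_g^-)ᗮ` becomes the
truncation `y_{<r}` of `y` to its first `r` coordinates, so `∠(x̄, V_g^-) = ‖y_{<r}‖ / ‖x‖`, while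
`‖g x‖ = ‖σ y‖` because `k` is an isometry. Comparing coordinatewise, `σ_r ≤ σ_i ≤ σ_1` for `i ≤ r`
gives `σ_r ‖y_{<r}‖ ≤ ‖(σ y)_{<r}‖ ≤ σ_1 ‖y_{<r}‖`, and `σ_i ≤ σ_{r+1}` for `i > r` bounds the
remaining block by `σ_{r+1} ‖y‖`.
-/

noncomputable section

/-- `∠(x̄, W) = ‖π_{W^⊥}(x)‖ / ‖x‖`, the sine of the angle between the line `ℝx` and `W`. -/
def angLine {d : ℕ} (x : Euc d) (W : Submodule ℝ (Euc d)) : ℝ :=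
  ‖(Wᗮ.orthogonalProjectionOnto x : Euc d)‖ / ‖x‖

/-- The span of the standard basis vectors `e_i` of `ℝ^d` with `r ≤ i`. -/
def stdSpanGE (d r : ℕ) : Submodule ℝ (Euc d) :=
  Submodule.span ℝ ((fun i => EuclideanSpace.single i (1 : ℝ)) '' {i : Fin d | r ≤ (i : ℕ)})

open Submodule

theorem EuclideanSpace.norm_le_norm_of_abs_le {ι : Type*} [Fintype ι] {v w : EuclideanSpace ℝ ι}
    (h : ∀ i, |v i| ≤ |w i|) : ‖v‖ ≤ ‖w‖ := by
  simp only [EuclideanSpace.norm_eq, Real.norm_eq_abs]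
  gcongr √(∑ i, ?_ ^ 2) with i
  exact h i

theorem EuclideanSpace.mul_norm_le_norm_of_forall {ι : Type*} [Fintype ι]
    {v w : EuclideanSpace ℝ ι} {c : ℝ} (hc : 0 ≤ c) (h : ∀ i, c * |v i| ≤ |w i|) :
    c * ‖v‖ ≤ ‖w‖ := by
  simpa [norm_smul, abs_of_nonneg hc] using
    norm_le_norm_of_abs_le (v := c • v) fun i => by simpa [abs_mul, abs_of_nonneg hc] using h i

theorem EuclideanSpace.norm_le_mul_norm_of_forall {ι : Type*} [Fintype ι]
    {v w : EuclideanSpace ℝ ι} {c : ℝ} (hc : 0 ≤ c) (h : ∀ i, |v i| ≤ c * |w i|) :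
    ‖v‖ ≤ c * ‖w‖ := by
  simpa [norm_smul, abs_of_nonneg hc] using
    norm_le_norm_of_abs_le (w := c • w) fun i => by simpa [abs_mul, abs_of_nonneg hc] using h i

variable {d : ℕ}

def truncLT (r : ℕ) (y : Euc d) : Euc d :=
  WithLp.toLp 2 fun i => if (i : ℕ) < r then y i else 0

@[simp] lemma truncLT_apply (r : ℕ) (y : Euc d) (i : Fin d) :
    truncLT r y i = if (i : ℕ) < r then y i else 0 := rfl

lemma truncLT_mem_orthogonal_stdSpanGE (r : ℕ) (y : Euc d) :
    truncLT r y ∈ (stdSpanGE d r)ᗮ := by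
  have : span ℝ {truncLT r y} ⟂ stdSpanGE d r := by
    refine isOrtho_span.mpr ?_
    rintro _ rfl _ ⟨i, hi : r ≤ (i : ℕ), rfl⟩
    simp [EuclideanSpace.inner_single_right, hi.not_gt]
  exact this (mem_span_singleton_self _)

lemma sub_truncLT_mem_stdSpanGE (r : ℕ) (y : Euc d) : y - truncLT r y ∈ stdSpanGE d r := by
  rw [← (EuclideanSpace.basisFun (Fin d) ℝ).sum_repr (y - truncLT r y)]
  refine sum_mem fun i _ => ?_
  by_cases hi : r ≤ (i : ℕ)
  · exact smul_mem _ _ (subset_span ⟨i, hi, by simp⟩)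
  · simp [not_le.mp hi]

lemma starProjection_orthogonal_stdSpanGE (r : ℕ) (y : Euc d) :
    (stdSpanGE d r)ᗮ.starProjection y = truncLT r y :=
  eq_starProjection_of_mem_orthogonal (truncLT_mem_orthogonal_stdSpanGE r y)
    (le_orthogonal_orthogonal _ (sub_truncLT_mem_stdSpanGE r y))

lemma angLine_map_linearIsometryEquiv (f : Euc d ≃ₗᵢ[ℝ] Euc d) (x : Euc d)
    (W : Submodule ℝ (Euc d)) :
    angLine x (W.map (f.toLinearEquiv : Euc d →ₗ[ℝ] Euc d)) = angLine (f.symm x) W := by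
  simp only [angLine, ← starProjection_apply, ← map_orthogonal_equiv, starProjection_map_apply,
    LinearIsometryEquiv.norm_map]

lemma angLine_stdSpanGE (r : ℕ) (y : Euc d) :
    angLine y (stdSpanGE d r) = ‖truncLT r y‖ / ‖y‖ := by
  rw [angLine, ← starProjection_apply, starProjection_orthogonal_stdSpanGE]

section Diagonal

variable {σ : Fin d → ℝ} {y z : Euc d} {r : ℕ}

lemma mul_norm_truncLT_le_norm (hσ : Antitone σ) (hσ0 : ∀ i, 0 ≤ σ i)
    (hz : ∀ i, z i = σ i * y i) (j : Fin d) (hj : r ≤ j + 1) :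
    σ j * ‖truncLT r y‖ ≤ ‖z‖ :=
  EuclideanSpace.mul_norm_le_norm_of_forall (hσ0 j) fun i => by
    rw [truncLT_apply, hz i, abs_mul, abs_of_nonneg (hσ0 i)]
    split_ifs with hi
    · exact mul_le_mul_of_nonneg_right (hσ (Fin.le_def.mpr (by omega))) (abs_nonneg _)
    · simpa using mul_nonneg (hσ0 i) (abs_nonneg (y i))

lemma norm_truncLT_le (hσ : Antitone σ) (hσ0 : ∀ i, 0 ≤ σ i) (hz : ∀ i, z i = σ i * y i)
    (hd : 0 < d) : ‖truncLT r z‖ ≤ σ ⟨0, hd⟩ * ‖truncLT r y‖ :=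
  EuclideanSpace.norm_le_mul_norm_of_forall (hσ0 _) fun i => by
    simp only [truncLT_apply]
    split_ifs
    · rw [hz i, abs_mul, abs_of_nonneg (hσ0 i)]
      exact mul_le_mul_of_nonneg_right (hσ (Fin.le_def.mpr (Nat.zero_le _))) (abs_nonneg _)
    · simp

lemma norm_sub_truncLT_le (hσ : Antitone σ) (hσ0 : ∀ i, 0 ≤ σ i) (hz : ∀ i, z i = σ i * y i)
    (hr : r < d) : ‖z - truncLT r z‖ ≤ σ ⟨r, hr⟩ * ‖y‖ :=
  EuclideanSpace.norm_le_mul_norm_of_forall (hσ0 _) fun i => by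
    rw [PiLp.sub_apply, truncLT_apply]
    split_ifs with hi
    · simpa using mul_nonneg (hσ0 ⟨r, hr⟩) (abs_nonneg (y i))
    · rw [sub_zero, hz i, abs_mul, abs_of_nonneg (hσ0 i)]
      exact mul_le_mul_of_nonneg_right (hσ (Fin.le_def.mpr (show r ≤ (i : ℕ) by omega)))
        (abs_nonneg _)

lemma norm_le_mul_norm_truncLT_add (hσ : Antitone σ) (hσ0 : ∀ i, 0 ≤ σ i)
    (hz : ∀ i, z i = σ i * y i) (hr : r < d) :
    ‖z‖ ≤ σ ⟨0, Nat.zero_lt_of_lt hr⟩ * ‖truncLT r y‖ + σ ⟨r, hr⟩ * ‖y‖ :=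
  calc ‖z‖ = ‖truncLT r z + (z - truncLT r z)‖ := by rw [add_sub_cancel]
    _ ≤ ‖truncLT r z‖ + ‖z - truncLT r z‖ := norm_add_le _ _
    _ ≤ _ := add_le_add (norm_truncLT_le hσ hσ0 hz _) (norm_sub_truncLT_le hσ hσ0 hz hr)

end Diagonal

theorem stmt2 {d r : ℕ} (hrd : r < d)
    (g : Euc d →ₗ[ℝ] Euc d)
    -- Cartan decomposition `g = k ∘ diag σ ∘ l` with `σ_1 ≥ ... ≥ σ_d > 0`
    (k l : Euc d ≃ₗᵢ[ℝ] Euc d) (σ : Fin d → ℝ) (hσmono : Antitone σ) (hσpos : ∀ i, 0 < σ i)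
    (hcartan : ∀ x : Euc d, ∀ i : Fin d, k.symm (g x) i = σ i * l x i)
    (x : Euc d) :
    σ ⟨r - 1, by omega⟩ *
        angLine x ((stdSpanGE d r).map (l.symm.toLinearEquiv : Euc d →ₗ[ℝ] Euc d)) ≤
      ‖g x‖ / ‖x‖ ∧
    ‖g x‖ / ‖x‖ ≤
      σ ⟨0, by omega⟩ *
          angLine x ((stdSpanGE d r).map (l.symm.toLinearEquiv : Euc d →ₗ[ℝ] Euc d)) +
        σ ⟨r, hrd⟩ := by
  have hσ0 : ∀ i, 0 ≤ σ i := fun i => (hσpos i).le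
  rw [angLine_map_linearIsometryEquiv, LinearIsometryEquiv.symm_symm, angLine_stdSpanGE,
    l.norm_map, ← k.symm.norm_map (g x)]
  simp only [← mul_div_assoc]
  refine ⟨div_le_div_of_nonneg_right
    (mul_norm_truncLT_le_norm hσmono hσ0 (hcartan x) _ (show r ≤ r - 1 + 1 by omega)) (norm_nonneg x), ?_⟩
  calc ‖k.symm (g x)‖ / ‖x‖
      ≤ (σ ⟨0, by omega⟩ * ‖truncLT r (l x)‖ + σ ⟨r, hrd⟩ * ‖x‖) / ‖x‖ := by
        gcongr
        simpa only [l.norm_map] using norm_le_mul_norm_truncLT_add hσmono hσ0 (hcartan x) hrd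
    _ ≤ σ ⟨0, by omega⟩ * ‖truncLT r (l x)‖ / ‖x‖ + σ ⟨r, hrd⟩ := by
        rw [add_div, mul_div_assoc (σ ⟨r, hrd⟩)]
        gcongr
        exact mul_le_of_le_one_right (hσ0 _) (div_self_le_one _)
end
end

section
/- There is no (4d−4)-dimensional real subspace W of R^{4d} ≅ H^d such that every quaternionic line H·v (v ≠ 0) intersects W nontrivially. Consequently, the limit set of SL(d,H), consisting of all quaternionic lines, is not contained in any proper Schubert variety of the Grassmannian Gr(4, 4d). -/
open scoped Quaternion

open MeasureTheory Module

noncomputable section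

set_option maxHeartbeats 1000000 in
theorem stmt5 (d : ℕ) (hd : 1 ≤ d) :
    ¬ ∃ W : Submodule ℝ (Fin d → ℍ[ℝ]),
      Module.finrank ℝ W = 4 * d - 4 ∧
      ∀ v : Fin d → ℍ[ℝ], v ≠ 0 →
        ((Submodule.span ℍ[ℝ] {v}).restrictScalars ℝ) ⊓ W ≠ ⊥ := by
  rintro ⟨W, hWrank, hmeet⟩
  -- the scalar multiplication `ℍ × (Fin d → ℍ) → (Fin d → ℍ)` is a bounded bilinear map
  have hB : IsBoundedBilinearMap ℝ
      (fun p : ℍ[ℝ] × (Fin d → ℍ[ℝ]) => p.1 • p.2) :=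
    ⟨fun a b v => add_smul a b v, fun c a v => smul_assoc c a v,
      fun a v w => smul_add a v w, fun c a v => smul_comm a c v, 1, one_pos,
      fun a v => by rw [one_mul]; exact norm_smul_le a v⟩
  -- surjectivity of `(a, w) ↦ a • w`
  have hsurj : ∀ v : Fin d → ℍ[ℝ], ∃ p : ℍ[ℝ] × W, p.1 • (p.2 : Fin d → ℍ[ℝ]) = v := by
    intro v
    by_cases hv : v = 0
    · exact ⟨(0, 0), by simp [hv]⟩
    · have h := hmeet v hv
      rw [Submodule.ne_bot_iff] at h
      obtain ⟨x, hx, hx0⟩ := h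
      rw [Submodule.mem_inf] at hx
      obtain ⟨hx1, hx2⟩ := hx
      rw [Submodule.restrictScalars_mem, Submodule.mem_span_singleton] at hx1
      obtain ⟨a, ha⟩ := hx1
      have ha0 : a ≠ 0 := by rintro rfl; rw [zero_smul] at ha; exact hx0 ha.symm
      refine ⟨(a⁻¹, ⟨x, hx2⟩), ?_⟩
      show a⁻¹ • x = v
      rw [← ha]
      exact inv_smul_smul₀ ha0 v
  -- dimensions
  have hdimV : finrank ℝ (Fin d → ℍ[ℝ]) = 4 * d := by
    rw [Module.finrank_pi_fintype, Finset.sum_const, Finset.card_univ, Fintype.card_fin,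
      Quaternion.finrank_eq_four, smul_eq_mul, mul_comm]
  have hdim1 : finrank ℝ (ℍ[ℝ] × W) = 4 * d := by
    rw [Module.finrank_prod, hWrank, Quaternion.finrank_eq_four]
    omega
  have hdimE : finrank ℝ (EuclideanSpace ℝ (Fin (4 * d))) = 4 * d := finrank_euclideanSpace_fin
  haveI : Nontrivial (EuclideanSpace ℝ (Fin (4 * d))) := by
    refine Module.nontrivial_of_finrank_pos (R := ℝ) ?_
    rw [hdimE]; omega
  let e₁ : EuclideanSpace ℝ (Fin (4 * d)) ≃L[ℝ] ℍ[ℝ] × W :=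
    (LinearEquiv.ofFinrankEq _ _ (by rw [hdimE, hdim1])).toContinuousLinearEquiv
  let e₂ : (Fin d → ℍ[ℝ]) ≃L[ℝ] EuclideanSpace ℝ (Fin (4 * d)) :=
    (LinearEquiv.ofFinrankEq _ _ (by rw [hdimV, hdimE])).toContinuousLinearEquiv
  let j : ℍ[ℝ] × W →L[ℝ] ℍ[ℝ] × (Fin d → ℍ[ℝ]) :=
    (ContinuousLinearMap.id ℝ ℍ[ℝ]).prodMap W.subtypeL
  let g : EuclideanSpace ℝ (Fin (4 * d)) → EuclideanSpace ℝ (Fin (4 * d)) :=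
    fun x => e₂ ((e₁ x).1 • ((e₁ x).2 : Fin d → ℍ[ℝ]))
  let D : EuclideanSpace ℝ (Fin (4 * d)) →
      (EuclideanSpace ℝ (Fin (4 * d)) →L[ℝ] EuclideanSpace ℝ (Fin (4 * d))) := fun x =>
    ((e₂ : (Fin d → ℍ[ℝ]) →L[ℝ] EuclideanSpace ℝ (Fin (4 * d))).comp
      ((hB.deriv (j (e₁ x))).comp
        (j.comp (e₁ : EuclideanSpace ℝ (Fin (4 * d)) →L[ℝ] ℍ[ℝ] × W))))
  have hgderiv : ∀ x, HasFDerivAt g (D x) x := by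
    intro x
    have h1 : HasFDerivAt (fun y : EuclideanSpace ℝ (Fin (4 * d)) => j (e₁ y))
        (j.comp (e₁ : EuclideanSpace ℝ (Fin (4 * d)) →L[ℝ] ℍ[ℝ] × W)) x :=
      (j.comp (e₁ : EuclideanSpace ℝ (Fin (4 * d)) →L[ℝ] ℍ[ℝ] × W)).hasFDerivAt
    have h2 := (hB.hasFDerivAt (j (e₁ x))).comp x h1
    exact ((e₂ : (Fin d → ℍ[ℝ]) →L[ℝ] EuclideanSpace ℝ (Fin (4 * d))).hasFDerivAt).comp x h2
  have hdet : ∀ x, (D x).det = 0 := by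
    intro x
    have hex : ∃ m, m ≠ 0 ∧ (D x) m = 0 := by
      by_cases hp : e₁ x = (0 : ℍ[ℝ] × W)
      · obtain ⟨m, hm⟩ := exists_ne (0 : EuclideanSpace ℝ (Fin (4 * d)))
        refine ⟨m, hm, ?_⟩
        show e₂ (hB.deriv (j (e₁ x)) (j (e₁ m))) = 0
        rw [hp, hB.deriv_apply]
        have : (j (0 : ℍ[ℝ] × W)).1 = 0 := by simp [j]
        have h2 : (j (0 : ℍ[ℝ] × W)).2 = 0 := by simp [j]
        rw [this, h2, smul_zero, zero_smul, add_zero, map_zero]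
      · refine ⟨e₁.symm ((e₁ x).1, -(e₁ x).2), ?_, ?_⟩
        · intro h
          apply hp
          have h' := congrArg e₁ h
          rw [e₁.apply_symm_apply, map_zero] at h'
          have h1 : (e₁ x).1 = 0 := congrArg Prod.fst h'
          have h2 : -(e₁ x).2 = 0 := congrArg Prod.snd h'
          exact Prod.ext h1 (neg_eq_zero.mp h2)
        · show e₂ (hB.deriv (j (e₁ x)) (j ((e₁ : EuclideanSpace ℝ (Fin (4 * d)) →L[ℝ] ℍ[ℝ] × W)
            (e₁.symm ((e₁ x).1, -(e₁ x).2))))) = 0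
          have he : (e₁ : EuclideanSpace ℝ (Fin (4 * d)) →L[ℝ] ℍ[ℝ] × W)
              (e₁.symm ((e₁ x).1, -(e₁ x).2)) = ((e₁ x).1, -(e₁ x).2) :=
            e₁.apply_symm_apply _
          rw [he, hB.deriv_apply]
          have : (j (e₁ x)).1 • ((j ((e₁ x).1, -(e₁ x).2)).2)
              + (j ((e₁ x).1, -(e₁ x).2)).1 • ((j (e₁ x)).2) = (0 : Fin d → ℍ[ℝ]) := by
            show (e₁ x).1 • (((-(e₁ x).2 : W) : Fin d → ℍ[ℝ]))
              + (e₁ x).1 • (((e₁ x).2 : Fin d → ℍ[ℝ])) = 0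
            rw [Submodule.coe_neg, smul_neg, neg_add_cancel]
          rw [this, map_zero]
    obtain ⟨m, hm, hm0⟩ := hex
    have htfae := (LinearMap.hasEigenvalue_zero_tfae
      ((D x).toLinearMap : Module.End ℝ (EuclideanSpace ℝ (Fin (4 * d))))).out 3 5
    exact htfae.mpr ⟨m, hm, hm0⟩
  have himg : g '' Set.univ = Set.univ := by
    refine Set.eq_univ_of_forall fun y => ?_
    obtain ⟨p, hp⟩ := hsurj (e₂.symm y)
    refine ⟨e₁.symm p, Set.mem_univ _, ?_⟩
    show e₂ ((e₁ (e₁.symm p)).1 • ((e₁ (e₁.symm p)).2 : Fin d → ℍ[ℝ])) = y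
    rw [e₁.apply_symm_apply, hp, e₂.apply_symm_apply]
  have hzero : (volume : Measure (EuclideanSpace ℝ (Fin (4 * d)))) (g '' Set.univ) = 0 :=
    addHaar_image_eq_zero_of_det_fderivWithin_eq_zero volume
      (fun x _ => (hgderiv x).hasFDerivWithinAt) (fun x _ => hdet x)
  rw [himg] at hzero
  exact (isOpen_univ.measure_ne_zero volume Set.univ_nonempty) hzero
end
end

section
/- Let Γ' be a finite-index subgroup of a subgroup Γ ≤ GL_d(R). Then the proximal dimensions agree, r_{Γ'} = r_Γ, and the limit sets in the Grassmannian Gr(r_Γ, d) agree, L_{Γ'} = L_Γ. In particular, Γ satisfies property (S) if and only if Γ' does. -/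
noncomputable section

/-- The algebra of (continuous) linear endomorphisms of `ℝ^d`. -/
abbrev Endo (d : ℕ) := Euc d →L[ℝ] Euc d

/-- The set of matrices underlying a subgroup of `GL_d(ℝ)`. -/
def carrierSet {d : ℕ} (Γ : Subgroup (Endo d)ˣ) : Set (Endo d) :=
  (fun g : (Endo d)ˣ => (g : Endo d)) '' Γ

/-- The closure of `ℝ·S = {λ g : λ ∈ ℝ, g ∈ S}` in `End(ℝ^d)`. -/
def limPts {d : ℕ} (S : Set (Endo d)) : Set (Endo d) :=
  closure {f | ∃ (c : ℝ) (g : Endo d), g ∈ S ∧ f = c • g}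

/-- The rank of an endomorphism. -/
def rk {d : ℕ} (f : Endo d) : ℕ :=
  Module.finrank ℝ (LinearMap.range (f : Euc d →ₗ[ℝ] Euc d))

/-- The proximal dimension of `S`: the minimal rank of a nonzero element of `closure(ℝ·S)`. -/
def proxDim {d : ℕ} (S : Set (Endo d)) : ℕ :=
  sInf {r | ∃ f ∈ limPts S, f ≠ 0 ∧ rk f = r}

/-- `Π_S`: the set of elements of `closure(ℝ·S)` of rank equal to the proximal dimension. -/
def PiSet {d : ℕ} (S : Set (Endo d)) : Set (Endo d) :=
  {f | f ∈ limPts S ∧ f ≠ 0 ∧ rk f = proxDim S}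

/-- The limit set of `S` in the Grassmannian `Gr(r_S, d)`: images of elements of `Π_S`. -/
def limitSet {d : ℕ} (S : Set (Endo d)) : Set (Submodule ℝ (Euc d)) :=
  (fun f : Endo d => LinearMap.range (f : Euc d →ₗ[ℝ] Euc d)) '' PiSet S

/-- Property (S): every `(d - r_S)`-dimensional subspace is transverse to some member of the
limit set. -/
def PropS {d : ℕ} (S : Set (Endo d)) : Prop :=
  ∀ W : Submodule ℝ (Euc d), Module.finrank ℝ W = d - proxDim S →
    ∃ V ∈ limitSet S, V ⊓ W = ⊥

/-
Choose a finite set `T` with `Γ ⊆ Γ' * T`. Then `ℝ·Γ ⊆ ⋃ t ∈ T, (ℝ·Γ') * t`, and since right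
multiplication by a unit is a homeomorphism of `End(ℝ^d)`, the right-hand side with `ℝ·Γ'` replaced
by its closure is closed. Hence every `π ∈ closure(ℝ·Γ)` is `π' * t` with `π' ∈ closure(ℝ·Γ')`,
and right multiplication by a unit preserves images, hence ranks. Together with
`closure(ℝ·Γ') ⊆ closure(ℝ·Γ)` this identifies the ranks and images occurring for `Γ` and `Γ'`.
-/

open scoped Pointwise

theorem Subgroup.exists_finite_subset_mul_of_relIndex_ne_zero {G : Type*} [Group G]
    {H K : Subgroup G} (hHK : H.relIndex K ≠ 0) :
    ∃ T : Set G, T.Finite ∧ (K : Set G) ⊆ (H : Set G) * T := by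
  have : (H.subgroupOf K).FiniteIndex := Subgroup.finiteIndex_iff.mpr hHK
  obtain ⟨T, hT, -⟩ := (H.subgroupOf K).exists_isComplement_right 1
  refine ⟨Subtype.val '' T, hT.finite_right.image _, fun x hx => ?_⟩
  obtain ⟨⟨h, t⟩, hht⟩ := hT.2 ⟨x, hx⟩
  exact Set.mem_mul.mpr ⟨h, Subgroup.mem_subgroupOf.mp h.2, t, ⟨t, t.2, rfl⟩,
    congrArg Subtype.val hht⟩

theorem ContinuousLinearMap.range_mul_units {R E : Type*} [Semiring R] [TopologicalSpace E]
    [AddCommMonoid E] [Module R E] (f : E →L[R] E) (u : (E →L[R] E)ˣ) :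
    LinearMap.range ((f * u : E →L[R] E) : E →ₗ[R] E) = LinearMap.range (f : E →ₗ[R] E) :=
  LinearMap.range_comp_of_range_eq_top _ <| LinearMap.range_eq_top.mpr fun y =>
    ⟨(↑u⁻¹ : E →L[R] E) y, DFunLike.congr_fun u.mul_inv y⟩

section Endo

variable {d : ℕ}

lemma carrierSet_mono {Γ' Γ : Subgroup (Endo d)ˣ} (hle : Γ' ≤ Γ) :
    carrierSet Γ' ⊆ carrierSet Γ :=
  Set.image_mono hle

lemma carrierSet_subset_biUnion_image_mul {Γ' Γ : Subgroup (Endo d)ˣ} {T : Set (Endo d)ˣ}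
    (hT : (Γ : Set (Endo d)ˣ) ⊆ (Γ' : Set (Endo d)ˣ) * T) :
    carrierSet Γ ⊆ ⋃ t ∈ T, (· * (t : Endo d)) '' carrierSet Γ' := by
  rintro _ ⟨g, hg, rfl⟩
  obtain ⟨g', hg', t, ht, rfl⟩ := Set.mem_mul.mp (hT hg)
  exact Set.mem_biUnion ht ⟨g', ⟨g', hg', rfl⟩, rfl⟩

lemma limPts_mono {S' S : Set (Endo d)} (h : S' ⊆ S) : limPts S' ⊆ limPts S :=
  closure_mono fun _ ⟨c, g, hg, hf⟩ => ⟨c, g, h hg, hf⟩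

lemma limPts_subset_biUnion_image_mul {S' S : Set (Endo d)} {T : Set (Endo d)ˣ}
    (hT : T.Finite) (hS : S ⊆ ⋃ t ∈ T, (· * (t : Endo d)) '' S') :
    limPts S ⊆ ⋃ t ∈ T, (· * (t : Endo d)) '' limPts S' := by
  refine closure_minimal ?_ (hT.isClosed_biUnion fun t _ =>
    (ContinuousAddEquiv.mulRight t).toHomeomorph.isClosedMap _ isClosed_closure)
  rintro _ ⟨c, g, hg, rfl⟩
  obtain ⟨t, ht, g', hg', rfl⟩ := Set.mem_iUnion₂.mp (hS hg)
  exact Set.mem_biUnion ht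
    ⟨c • g', subset_closure ⟨c, g', hg', rfl⟩, ContinuousLinearMap.smul_comp c g' (t : Endo d)⟩

lemma rk_mul_units (f : Endo d) (u : (Endo d)ˣ) : rk (f * (u : Endo d)) = rk f := by
  rw [rk, rk, ContinuousLinearMap.range_mul_units]


lemma proxDim_eq_of_limPts_subset {S' S : Set (Endo d)} {T : Set (Endo d)ˣ}
    (hsub : limPts S' ⊆ limPts S)
    (hcov : limPts S ⊆ ⋃ t ∈ T, (· * (t : Endo d)) '' limPts S') :
    proxDim S' = proxDim S := by
  refine congrArg sInf (Set.ext fun r => ⟨?_, ?_⟩)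
  · rintro ⟨f, hf, hf0, rfl⟩
    exact ⟨f, hsub hf, hf0, rfl⟩
  · rintro ⟨_, hf, hf0, rfl⟩
    obtain ⟨t, -, f, hf', rfl⟩ := Set.mem_iUnion₂.mp (hcov hf)
    exact ⟨f, hf', left_ne_zero_of_mul hf0, (rk_mul_units f t).symm⟩

lemma limitSet_eq_of_limPts_subset {S' S : Set (Endo d)} {T : Set (Endo d)ˣ}
    (hsub : limPts S' ⊆ limPts S)
    (hcov : limPts S ⊆ ⋃ t ∈ T, (· * (t : Endo d)) '' limPts S') :
    limitSet S' = limitSet S := by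
  have hdim := proxDim_eq_of_limPts_subset hsub hcov
  refine Set.Subset.antisymm ?_ ?_
  · rintro _ ⟨f, ⟨hf, hf0, hrk⟩, rfl⟩
    exact ⟨f, ⟨hsub hf, hf0, hdim ▸ hrk⟩, rfl⟩
  · rintro _ ⟨_, ⟨hf, hf0, hrk⟩, rfl⟩
    obtain ⟨t, -, f, hf', rfl⟩ := Set.mem_iUnion₂.mp (hcov hf)
    refine ⟨f, ⟨hf', left_ne_zero_of_mul hf0, ?_⟩, (ContinuousLinearMap.range_mul_units f t).symm⟩
    rw [hdim, ← hrk, rk_mul_units]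

end Endo

theorem stmt8 {d : ℕ} (Γ Γ' : Subgroup (Endo d)ˣ) (hle : Γ' ≤ Γ)
    (hfi : Γ'.relIndex Γ ≠ 0) :
    proxDim (carrierSet Γ') = proxDim (carrierSet Γ) ∧
    limitSet (carrierSet Γ') = limitSet (carrierSet Γ) ∧
    (PropS (carrierSet Γ) ↔ PropS (carrierSet Γ')) := by
  obtain ⟨T, hT, hΓ⟩ := Subgroup.exists_finite_subset_mul_of_relIndex_ne_zero hfi
  have hsub := limPts_mono (carrierSet_mono hle)
  have hcov := limPts_subset_biUnion_image_mul hT (carrierSet_subset_biUnion_image_mul hΓ)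
  have hdim := proxDim_eq_of_limPts_subset hsub hcov
  have hlim := limitSet_eq_of_limPts_subset hsub hcov
  exact ⟨hdim, hlim, by rw [PropS, PropS, hdim, hlim]⟩
end
end

section
/- Let π ∈ End(R^d) have rank r, let V be an r-dimensional subspace with V ∩ ker π = {0}, and suppose λ_n g_n → π in End(R^d) for scalars λ_n and linear maps g_n ∈ GL_d(R). Then g_n V → im π in the Grassmannian Gr(r, d). -/
/-!
Write `ε = ‖λ g - π‖`. Since `V ∩ ker π = 0`, `π` is bounded below on `V`: `‖w‖ ≤ C ‖π w‖`.
For a unit vector `g w ∈ g V` we have `|λ| = ‖λ g w‖ ≥ ‖π w‖ - ε ‖w‖`, so `‖w‖ ≤ 2 C |λ|` once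
`C ε ≤ 1/2`, and `λ⁻¹ π w ∈ im π` lies within `ε ‖w‖ / |λ| ≤ 2 C ε` of `g w`. Conversely,
the rank condition gives `π V = im π`, so a unit vector of `im π` is `π w` with `w ∈ V` and
`‖w‖ ≤ C`, and it lies within `ε C` of `λ g w ∈ g V`.
-/

open Filter

noncomputable section

open Metric Topology

section LinearAlgebra

variable {K M N : Type*} [DivisionRing K] [AddCommGroup M] [Module K M]
  [AddCommGroup N] [Module K N]

theorem Submodule.map_eq_range_of_disjoint_ker [FiniteDimensional K N] {f : M →ₗ[K] N}
    {V : Submodule K M} (hV : Disjoint V (LinearMap.ker f))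
    (hrank : Module.finrank K V = Module.finrank K (LinearMap.range f)) :
    V.map f = LinearMap.range f := by
  refine Submodule.eq_of_le_of_finrank_eq LinearMap.map_le_range ?_
  rw [← LinearMap.range_domRestrict,
    LinearMap.finrank_range_of_inj (LinearMap.injective_domRestrict_iff.mpr hV), hrank]

end LinearAlgebra

section Normed

variable {E F : Type*} [NormedAddCommGroup E] [NormedSpace ℝ E]
  [NormedAddCommGroup F] [NormedSpace ℝ F]

theorem Submodule.exists_pos_norm_le_mul_norm_of_disjoint_ker {f : E →ₗ[ℝ] F}
    {V : Submodule ℝ E} [FiniteDimensional ℝ V] (hV : Disjoint V (LinearMap.ker f)) :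
    ∃ C > 0, ∀ w ∈ V, ‖w‖ ≤ C * ‖f w‖ := by
  obtain ⟨C, hC, hanti⟩ := (f.domRestrict V).exists_antilipschitzWith
    (LinearMap.ker_eq_bot.mpr (LinearMap.injective_domRestrict_iff.mpr hV))
  refine ⟨C, hC, fun w hw => ?_⟩
  simpa [dist_eq_norm] using hanti.le_mul_dist (⟨w, hw⟩ : V) 0

theorem infDist_apply_range_le {f π : E →L[ℝ] F} {c C : ℝ} {w : E}
    (hw : ‖w‖ ≤ C * ‖π w‖) (hCε : C * ‖c • f - π‖ ≤ 1 / 2) (hfw : ‖f w‖ = 1) :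
    infDist (f w) (LinearMap.range (π : E →ₗ[ℝ] F) : Set F) ≤ 2 * C * ‖c • f - π‖ := by
  set ε := ‖c • f - π‖
  have hclose : ‖c • f w - π w‖ ≤ ε * ‖w‖ := (c • f - π).le_opNorm w
  have hw0 : 0 < ‖w‖ := norm_pos_iff.mpr fun h => by simp [h] at hfw
  have hC : 0 < C := pos_of_mul_pos_left (hw0.trans_le hw) (norm_nonneg _)
  have hπw : ‖π w‖ ≤ |c| + ε * ‖w‖ := by
    calc ‖π w‖ ≤ ‖c • f w‖ + ‖c • f w - π w‖ := by
          simpa only [norm_sub_rev] using norm_le_insert' (π w) (c • f w)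
      _ ≤ |c| + ε * ‖w‖ := by
        rw [norm_smul, hfw, Real.norm_eq_abs, mul_one]; gcongr
  have hw_le : ‖w‖ ≤ 2 * C * |c| := by
    nlinarith [mul_le_mul_of_nonneg_left hπw hC.le, mul_le_mul_of_nonneg_right hCε hw0.le]
  have hc : 0 < |c| := by nlinarith
  have hmem : c⁻¹ • π w ∈ (LinearMap.range (π : E →ₗ[ℝ] F) : Set F) :=
    Submodule.smul_mem _ _ (LinearMap.mem_range_self _ w)
  calc infDist (f w) _ ≤ dist (f w) (c⁻¹ • π w) := infDist_le_dist_of_mem hmem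
    _ = |c|⁻¹ * ‖c • f w - π w‖ := by
      rw [dist_eq_norm, ← abs_inv, ← Real.norm_eq_abs, ← norm_smul, smul_sub, smul_smul,
        inv_mul_cancel₀ (abs_pos.mp hc), one_smul]
    _ ≤ |c|⁻¹ * (ε * (2 * C * |c|)) := by gcongr; exact hclose.trans (by gcongr)
    _ = 2 * C * ε := by field_simp

theorem infDist_apply_map_le {f π : E →L[ℝ] F} {V : Submodule ℝ E} (c : ℝ) {w : E}
    (hw : w ∈ V) :
    infDist (π w) (V.map (f : E →ₗ[ℝ] F) : Set F) ≤ ‖c • f - π‖ * ‖w‖ := by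
  have hmem : c • f w ∈ (V.map (f : E →ₗ[ℝ] F) : Set F) :=
    Submodule.smul_mem _ _ (Submodule.mem_map_of_mem hw)
  calc infDist (π w) _ ≤ dist (π w) (c • f w) := infDist_le_dist_of_mem hmem
    _ = ‖(c • f - π) w‖ := by rw [dist_comm, dist_eq_norm]; rfl
    _ ≤ ‖c • f - π‖ * ‖w‖ := (c • f - π).le_opNorm w

end Normed

section Grassmannian

variable {d : ℕ}

theorem dH_le {V V' : Submodule ℝ (Euc d)} {c : ℝ} (hc : 0 ≤ c)
    (h : ∀ v ∈ V, ‖v‖ = 1 → infDist v (V' : Set (Euc d)) ≤ c) : dH V V' ≤ c :=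
  Real.sSup_le (by rintro _ ⟨v, hv, hv1, rfl⟩; exact h v hv hv1) hc

theorem dH_nonneg (V V' : Submodule ℝ (Euc d)) : 0 ≤ dH V V' :=
  Real.sSup_nonneg (by rintro _ ⟨v, -, -, rfl⟩; exact infDist_nonneg)

theorem tendsto_dH_zero {V V' : ℕ → Submodule ℝ (Euc d)} {ε : ℕ → ℝ}
    (hε : Tendsto ε atTop (𝓝 0))
    (h : ∀ᶠ n in atTop, ∀ v ∈ V n, ‖v‖ = 1 → infDist v (V' n : Set (Euc d)) ≤ ε n) :
    Tendsto (fun n => dH (V n) (V' n)) atTop (𝓝 0) := by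
  have hmax : Tendsto (fun n => max (ε n) 0) atTop (𝓝 0) := by
    simpa using hε.max (tendsto_const_nhds (x := (0 : ℝ)))
  refine squeeze_zero' (Eventually.of_forall fun n => dH_nonneg _ _) ?_ hmax
  filter_upwards [h] with n hn
  exact dH_le (le_max_right _ _) fun v hv hv1 => (hn v hv hv1).trans (le_max_left _ _)

end Grassmannian

theorem stmt10 {d r : ℕ} (π : Endo d) (hrk : rk π = r)
    (V : Submodule ℝ (Euc d)) (hV : Module.finrank ℝ V = r)
    (hVker : V ⊓ LinearMap.ker (π : Euc d →ₗ[ℝ] Euc d) = ⊥)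
    (lam : ℕ → ℝ) (g : ℕ → (Endo d)ˣ)
    (hconv : Tendsto (fun n => lam n • ((g n : Endo d))) atTop (nhds π)) :
    Tendsto (fun n => dH (V.map (((g n : Endo d)) : Euc d →ₗ[ℝ] Euc d))
        (LinearMap.range (π : Euc d →ₗ[ℝ] Euc d))) atTop (nhds 0) ∧
    Tendsto (fun n => dH (LinearMap.range (π : Euc d →ₗ[ℝ] Euc d))
        (V.map (((g n : Endo d)) : Euc d →ₗ[ℝ] Euc d))) atTop (nhds 0) := by
  have hdisj : Disjoint V (LinearMap.ker (π : Euc d →ₗ[ℝ] Euc d)) := disjoint_iff.mpr hVker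
  obtain ⟨C, hC, hCV⟩ := Submodule.exists_pos_norm_le_mul_norm_of_disjoint_ker hdisj
  have hmap := Submodule.map_eq_range_of_disjoint_ker hdisj (hV.trans hrk.symm)
  set ε := fun n => ‖lam n • (g n : Endo d) - π‖
  have hCε : Tendsto (fun n => C * ε n) atTop (𝓝 0) := by
    simpa using (tendsto_iff_norm_sub_tendsto_zero.mp hconv).const_mul C
  constructor
  · refine tendsto_dH_zero (by simpa [mul_assoc] using hCε.const_mul 2) ?_
    filter_upwards [hCε.eventually (ge_mem_nhds one_half_pos)] with n hn
    rintro _ ⟨w, hw, rfl⟩ hw1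
    exact (infDist_apply_range_le (hCV w hw) hn hw1).trans_eq (mul_assoc _ _ _)
  · refine tendsto_dH_zero hCε (Eventually.of_forall fun n => ?_)
    rintro _ hu hu1
    rw [← hmap] at hu
    obtain ⟨w, hw, rfl⟩ := hu
    calc infDist (π w) _ ≤ ε n * ‖w‖ := infDist_apply_map_le (lam n) hw
      _ ≤ ε n * C := by gcongr; simpa [show ‖π w‖ = 1 from hu1] using hCV w hw
      _ = C * ε n := mul_comm _ _
end
end
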